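/- Asymptotically, X₄(n) = 2^{√(2n)(1+o(1))}; more precisely, for n = t(t+1)/2, X₄(n) = (t−1)2^t + 1 where t = (−1+√(1+8n))/2, so log₂ X₄(n) ∼ √(2n). -/

import Mathlib

/-! On the block `t(t+1)/2 < j ≤ (t+1)(t+2)/2`, of `t + 1` indices, `f(j) = t`; hence `X₄` grows by
`(t+1)·2^t` across each block, which telescopes to `X₄(t(t+1)/2) = (t−1)·2^t + 1`. For general `n`,
with `f = f(n)`, monotonicity gives `2^f ≤ X₄(n) ≤ (f+1)·2^(f+1)`, while `f ≤ √(2n) ≤ f + 2`. So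
`log₂ X₄(n)` and `√(2n)` differ from `f(n) → ∞` by `O(log f)` and `O(1)` respectively, and both are
asymptotic to `f(n)`. -/

open Filter Real

/-- `hanoiF j` is the largest nonnegative integer `m` with `j > m(m+1)/2`. -/
def hanoiF (j : ℕ) : ℕ := Nat.findGreatest (fun m => m * (m + 1) / 2 < j) j

/-- Frame–Stewart move count `X₄(n) = Σ_{j=1}^n 2^{f(j)}`. -/
def X4 (n : ℕ) : ℕ := ∑ j ∈ Finset.Icc 1 n, 2 ^ hanoiF j

open Asymptotics

lemma triangle_succ (a : ℕ) : (a + 1) * (a + 2) / 2 = a * (a + 1) / 2 + (a + 1) := by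
  have h : a * (a + 1) % 2 = 0 := Nat.even_iff.mp (Nat.even_mul_succ_self a)
  have : (a + 1) * (a + 2) = a * (a + 1) + 2 * (a + 1) := by ring
  omega

lemma triangle_mono : Monotone (fun m : ℕ => m * (m + 1) / 2) :=
  fun _ _ hab => Nat.div_le_div_right (Nat.mul_le_mul hab (by omega))

lemma triangle_hanoiF_lt {n : ℕ} (hn : 1 ≤ n) : hanoiF n * (hanoiF n + 1) / 2 < n :=
  Nat.findGreatest_spec (P := fun m => m * (m + 1) / 2 < n) (Nat.zero_le n) (by omega)

lemma le_triangle_hanoiF_succ (n : ℕ) : n ≤ (hanoiF n + 1) * (hanoiF n + 2) / 2 := by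
  by_contra! h
  have : hanoiF n + 1 ≤ n := by have := triangle_succ (hanoiF n); omega
  exact Nat.findGreatest_is_greatest (P := fun m => m * (m + 1) / 2 < n)
    (Nat.lt_succ_self _) this h

lemma hanoiF_eq_of_mem_Ioc {t j : ℕ}
    (hj : j ∈ Finset.Ioc (t * (t + 1) / 2) ((t + 1) * (t + 2) / 2)) : hanoiF j = t := by
  rw [Finset.mem_Ioc] at hj
  have hlt := triangle_hanoiF_lt (n := j) (by omega)
  have hle := le_triangle_hanoiF_succ j
  rcases lt_trichotomy (hanoiF j) t with h | h | h
  · have : (hanoiF j + 1) * (hanoiF j + 2) / 2 ≤ t * (t + 1) / 2 := triangle_mono h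
    omega
  · exact h
  · have : (t + 1) * (t + 2) / 2 ≤ hanoiF j * (hanoiF j + 1) / 2 := triangle_mono h
    omega

lemma tendsto_hanoiF_atTop : Tendsto hanoiF atTop atTop := by
  refine tendsto_atTop.2 fun m => (eventually_gt_atTop (m * (m + 1) / 2)).mono fun n hn => ?_
  by_contra! h
  have : (hanoiF n + 1) * (hanoiF n + 2) / 2 ≤ m * (m + 1) / 2 := triangle_mono h
  have := le_triangle_hanoiF_succ n
  omega

lemma X4_eq_sum_Ioc (n : ℕ) : X4 n = ∑ j ∈ Finset.Ioc 0 n, 2 ^ hanoiF j := rfl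

lemma X4_triangle_succ (t : ℕ) :
    X4 ((t + 1) * (t + 2) / 2) = X4 (t * (t + 1) / 2) + (t + 1) * 2 ^ t := by
  have hblock : ∑ j ∈ Finset.Ioc (t * (t + 1) / 2) ((t + 1) * (t + 2) / 2), 2 ^ hanoiF j
      = (t + 1) * 2 ^ t := by
    rw [Finset.sum_congr rfl fun j hj => by rw [hanoiF_eq_of_mem_Ioc hj], Finset.sum_const,
      Nat.card_Ioc, triangle_succ, Nat.add_sub_cancel_left, smul_eq_mul]
  rw [X4_eq_sum_Ioc, X4_eq_sum_Ioc, ← hblock, Finset.sum_Ioc_consecutive _ (Nat.zero_le _)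
    (triangle_mono (Nat.le_succ t))]

lemma X4_triangle (s : ℕ) : X4 ((s + 1) * (s + 2) / 2) = s * 2 ^ (s + 1) + 1 := by
  induction s with
  | zero => decide
  | succ s ih => rw [X4_triangle_succ, ih]; ring

lemma X4_mono : Monotone X4 :=
  fun _ _ hab => Finset.sum_le_sum_of_subset (Finset.Icc_subset_Icc_right hab)

lemma two_pow_hanoiF_le_X4 {n : ℕ} (hn : 1 ≤ n) : 2 ^ hanoiF n ≤ X4 n :=
  Finset.single_le_sum (f := fun j => 2 ^ hanoiF j) (fun _ _ => Nat.zero_le _)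
    (Finset.mem_Icc.2 ⟨hn, le_rfl⟩)

lemma X4_le (n : ℕ) : X4 n ≤ (hanoiF n + 1) * 2 ^ (hanoiF n + 1) :=
  calc X4 n ≤ X4 ((hanoiF n + 1) * (hanoiF n + 2) / 2) := X4_mono (le_triangle_hanoiF_succ n)
    _ = hanoiF n * 2 ^ (hanoiF n + 1) + 1 := X4_triangle _
    _ ≤ (hanoiF n + 1) * 2 ^ (hanoiF n + 1) := by
      rw [add_mul, one_mul]; exact Nat.add_le_add_left Nat.one_le_two_pow _

lemma X4_pos {n : ℕ} (hn : 1 ≤ n) : 0 < X4 n :=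
  Nat.one_le_two_pow.trans (two_pow_hanoiF_le_X4 hn)

lemma hanoiF_le_logb_X4 {n : ℕ} (hn : 1 ≤ n) : (hanoiF n : ℝ) ≤ logb 2 (X4 n) := by
  rw [Real.le_logb_iff_rpow_le one_lt_two (by exact_mod_cast X4_pos hn), Real.rpow_natCast]
  exact_mod_cast two_pow_hanoiF_le_X4 hn

lemma logb_X4_le {n : ℕ} (hn : 1 ≤ n) :
    logb 2 (X4 n) ≤ hanoiF n + (1 + logb 2 (hanoiF n + 1)) := by
  rw [Real.logb_le_iff_le_rpow one_lt_two (by exact_mod_cast X4_pos hn), ← add_assoc,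
    Real.rpow_add two_pos, Real.rpow_logb two_pos (by norm_num) (by positivity), mul_comm,
    ← Nat.cast_add_one, Real.rpow_natCast]
  exact_mod_cast X4_le n

lemma hanoiF_le_sqrt {n : ℕ} (hn : 1 ≤ n) : (hanoiF n : ℝ) ≤ √(2 * n) := by
  rw [Real.le_sqrt (by positivity) (by positivity)]
  have hlt := triangle_hanoiF_lt hn
  have heven := Nat.div_two_mul_two_of_even (Nat.even_mul_succ_self (hanoiF n))
  have : hanoiF n ^ 2 ≤ 2 * n := by nlinarith
  exact_mod_cast this

lemma sqrt_le_hanoiF_add_two (n : ℕ) : √(2 * n) ≤ hanoiF n + 2 := by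
  rw [Real.sqrt_le_left (by positivity)]
  have hle := le_triangle_hanoiF_succ n
  have hdiv := Nat.div_mul_le_self ((hanoiF n + 1) * (hanoiF n + 2)) 2
  have : 2 * n ≤ (hanoiF n + 2) ^ 2 := by nlinarith
  exact_mod_cast this

lemma Asymptotics.isEquivalent_of_le_of_le_add {α : Type*} {l : Filter α} {u v w : α → ℝ}
    (hlow : ∀ᶠ x in l, v x ≤ u x) (hupp : ∀ᶠ x in l, u x ≤ v x + w x) (hw : w =o[l] v) :
    u ~[l] v := by
  refine IsLittleO.isEquivalent (IsBigO.trans_isLittleO (IsBigO.of_bound 1 ?_) hw)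
  filter_upwards [hlow, hupp] with x h1 h2
  rw [Pi.sub_apply, one_mul, Real.norm_of_nonneg (sub_nonneg.2 h1)]
  exact (sub_le_iff_le_add'.2 h2).trans (Real.le_norm_self _)

lemma isLittleO_one_add_logb_add_one :
    (fun x : ℝ => 1 + logb 2 (x + 1)) =o[atTop] id := by
  have hshift : (fun x : ℝ => x + 1) =O[atTop] id :=
    (isBigO_refl id atTop).add (isLittleO_const_id_atTop 1).isBigO
  have hlog : (fun x : ℝ => log (x + 1)) =o[atTop] id :=
    (isLittleO_log_id_atTop.comp_tendsto
      (tendsto_atTop_add_const_right _ 1 tendsto_id)).trans_isBigO hshift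
  refine (isLittleO_const_id_atTop 1).add ((hlog.const_mul_left (log 2)⁻¹).congr_left fun x => ?_)
  rw [Real.logb, div_eq_inv_mul]

lemma tendsto_natCast_hanoiF_atTop : Tendsto (fun n => (hanoiF n : ℝ)) atTop atTop :=
  tendsto_natCast_atTop_atTop.comp tendsto_hanoiF_atTop

lemma sqrt_two_mul_isEquivalent_hanoiF :
    (fun n : ℕ => √(2 * n)) ~[atTop] (fun n => (hanoiF n : ℝ)) :=
  isEquivalent_of_le_of_le_add (w := fun _ => 2)
    ((eventually_ge_atTop 1).mono fun _ hn => hanoiF_le_sqrt hn)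
    (Eventually.of_forall sqrt_le_hanoiF_add_two)
    ((isLittleO_const_id_atTop 2).comp_tendsto tendsto_natCast_hanoiF_atTop)

lemma logb_X4_isEquivalent_hanoiF :
    (fun n => logb 2 (X4 n)) ~[atTop] (fun n => (hanoiF n : ℝ)) :=
  isEquivalent_of_le_of_le_add
    ((eventually_ge_atTop 1).mono fun _ hn => hanoiF_le_logb_X4 hn)
    ((eventually_ge_atTop 1).mono fun _ hn => logb_X4_le hn)
    (isLittleO_one_add_logb_add_one.comp_tendsto tendsto_natCast_hanoiF_atTop)

/-- Growth rate of the Frame–Stewart numbers: at triangular numbers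
`X₄(t(t+1)/2) = (t−1)·2^t + 1`, and asymptotically
`log₂ X₄(n) ∼ √(2n)`, i.e. `X₄(n) = 2^{√(2n)(1+o(1))}`. -/
theorem stmt_17 :
    (∀ t : ℕ, 1 ≤ t → X4 (t * (t + 1) / 2) = (t - 1) * 2 ^ t + 1) ∧
    Tendsto (fun n : ℕ => Real.logb 2 (X4 n) / Real.sqrt (2 * n)) atTop (nhds 1) := by
  refine ⟨fun t ht => ?_, ?_⟩
  · obtain ⟨s, rfl⟩ := Nat.exists_eq_add_of_le' ht
    simpa using X4_triangle s
  · have hsqrt_ne : ∀ᶠ n : ℕ in atTop, √(2 * (n : ℝ)) ≠ 0 :=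
      (eventually_gt_atTop 0).mono fun n hn => by positivity
    exact (isEquivalent_iff_tendsto_one hsqrt_ne).1
      (logb_X4_isEquivalent_hanoiF.trans sqrt_two_mul_isEquivalent_hanoiF.symm)
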